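/- arXiv:2602.04181 — 4 statements merged into one kernel-verified Lean document; each statement's English description precedes it below -/
import Mathlib

section
/- (Selection consistency, bounded-variance version, one competitor.) Assume f_k and f_{k*} are L-Lipschitz with f_k(q) − f_{k*}(q) ≥ Δ, let the noise differences δ_i := ε_{i,k} − ε_{i,k*} be independent across i with E[δ_i] = 0 and Var(δ_i) ≤ 4σ², define the weighted estimates Ê_k := Σ_{i=1}^n w̃_i (f_k(x_i) + ε_{i,k}) and Ê_{k*} := Σ_{i=1}^n w̃_i (f_{k*}(x_i) + ε_{i,k*}), and set b := L · Σ_{i=1}^n w̃_i ‖x_i − q‖. If Δ > 2b, then the probability that the estimates rank the kernels incorrectly satisfies P(Ê_k ≤ Ê_{k*}) ≤ 4σ² / ((Δ − 2b)² · N_eff). -/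
open MeasureTheory ProbabilityTheory

/-- **Selection consistency, bounded-variance version, one competitor.**
Assume `f_k` and `f_{k*}` are `L`-Lipschitz with margin
`f_k(q) − f_{k*}(q) ≥ Δ` at the query point `q`, let the noise differences
`δ_i := ε_{i,k} − ε_{i,k*}` be independent, mean zero, with `Var(δ_i) ≤ 4σ²`,
define the weighted estimates `Ê_k := Σ_i w̃_i (f_k(x_i) + ε_{i,k})` and
`Ê_{k*} := Σ_i w̃_i (f_{k*}(x_i) + ε_{i,k*})`, and set the bias
`b := L · Σ_i w̃_i ‖x_i − q‖`.  If `Δ > 2b`, then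
`P(Ê_k ≤ Ê_{k*}) ≤ 4σ² / ((Δ − 2b)² · N_eff)`. -/
theorem cake_selection_consistency_chebyshev {Ω : Type*} [MeasureSpace Ω]
    [IsProbabilityMeasure (ℙ : Measure Ω)] {d n : ℕ}
    (q : EuclideanSpace ℝ (Fin d)) (x : Fin n → EuclideanSpace ℝ (Fin d))
    (w : Fin n → ℝ) (hw : ∀ i, 0 ≤ w i) (hsum : ∑ i, w i = 1)
    (Neff : ℝ) (hNeff : Neff = (∑ i, (w i) ^ 2)⁻¹)
    (fk fks : EuclideanSpace ℝ (Fin d) → ℝ) (L : ℝ)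
    (hfk : ∀ a b : EuclideanSpace ℝ (Fin d), |fk a - fk b| ≤ L * ‖a - b‖)
    (hfks : ∀ a b : EuclideanSpace ℝ (Fin d), |fks a - fks b| ≤ L * ‖a - b‖)
    (Δ : ℝ) (hΔ : 0 < Δ) (hmargin : Δ ≤ fk q - fks q)
    (εk εks : Fin n → Ω → ℝ)
    (δ : Fin n → Ω → ℝ) (hδ : ∀ i ω, δ i ω = εk i ω - εks i ω)
    (hmeas : ∀ i, Measurable (δ i)) (hL2 : ∀ i, MemLp (δ i) 2)
    (hindep : iIndepFun δ ℙ)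
    (hmean : ∀ i, ∫ ω, δ i ω = 0)
    (σ : ℝ) (hvar : ∀ i, variance (δ i) ℙ ≤ 4 * σ ^ 2)
    (Ek Eks : Ω → ℝ)
    (hEk : ∀ ω, Ek ω = ∑ i, w i * (fk (x i) + εk i ω))
    (hEks : ∀ ω, Eks ω = ∑ i, w i * (fks (x i) + εks i ω))
    (b : ℝ) (hb : b = L * ∑ i, w i * ‖x i - q‖)
    (hgap : 2 * b < Δ) :
    ℙ {ω | Ek ω ≤ Eks ω} ≤ ENNReal.ofReal (4 * σ ^ 2 / ((Δ - 2 * b) ^ 2 * Neff)) := by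

  classical
  -- the weighted noise sum
  set S : Ω → ℝ := fun ω => ∑ i, w i * δ i ω with hS
  have hSsum : S = ∑ i, (fun ω => w i * δ i ω) := by
    funext ω; simp [hS, Finset.sum_apply]
  have hY2 : ∀ i : Fin n, MemLp (fun ω => w i * δ i ω) 2 (ℙ : Measure Ω) :=
    fun i => (hL2 i).const_mul _
  have hS2 : MemLp S 2 (ℙ : Measure Ω) := by
    rw [hSsum]; exact memLp_finset_sum' _ fun i _ => hY2 i
  -- mean of S is 0
  have hSmean : ∫ ω, S ω = 0 := by
    rw [hS]
    rw [integral_finset_sum _ (fun i _ => ((hL2 i).integrable one_le_two).const_mul _)]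
    simp [integral_const_mul, hmean]
  -- variance of S
  have hpos : 0 < ∑ i, (w i) ^ 2 := by
    by_contra hc
    push_neg at hc
    have hz : ∑ i, (w i) ^ 2 = 0 :=
      le_antisymm hc (Finset.sum_nonneg fun i _ => sq_nonneg _)
    have hall := (Finset.sum_eq_zero_iff_of_nonneg (fun i _ => sq_nonneg (w i))).mp hz
    have hzz : (∑ i, w i) = 0 := Finset.sum_eq_zero fun i hi => by
      have := hall i hi; exact pow_eq_zero_iff two_ne_zero |>.mp this
    rw [hsum] at hzz; norm_num at hzz
  have hvarS : variance S ℙ ≤ 4 * σ ^ 2 * ∑ i, (w i) ^ 2 := by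
    rw [hSsum]
    rw [ProbabilityTheory.IndepFun.variance_sum (fun i _ => hY2 i) ?_]
    · calc ∑ i, variance (fun ω => w i * δ i ω) ℙ
          = ∑ i, (w i)^2 * variance (δ i) ℙ := by
            refine Finset.sum_congr rfl fun i _ => ?_
            exact variance_const_mul (w i) (δ i) ℙ
        _ ≤ ∑ i, (w i)^2 * (4 * σ ^ 2) := by
            exact Finset.sum_le_sum fun i _ =>
              mul_le_mul_of_nonneg_left (hvar i) (sq_nonneg _)
        _ = 4 * σ ^ 2 * ∑ i, (w i) ^ 2 := by rw [← Finset.sum_mul]; ring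
    · intro i _ j _ hij
      have := hindep.indepFun hij
      exact this.comp (measurable_const_mul (w i)) (measurable_const_mul (w j))
  -- deterministic gap
  have hdet : ∀ ω, Ek ω - Eks ω = (∑ i, w i * (fk (x i) - fks (x i))) + S ω := by
    intro ω
    rw [hEk, hEks, hS]
    rw [← Finset.sum_sub_distrib, ← Finset.sum_add_distrib]
    refine Finset.sum_congr rfl fun i _ => ?_
    rw [hδ]; ring
  have hgapsum : Δ - 2 * b ≤ ∑ i, w i * (fk (x i) - fks (x i)) := by
    have h1 : ∀ i, w i * Δ - 2 * L * (w i * ‖x i - q‖) ≤ w i * (fk (x i) - fks (x i)) := by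
      intro i
      have ha := hfk (x i) q
      have hb' := hfks (x i) q
      have h2 : Δ - 2 * (L * ‖x i - q‖) ≤ fk (x i) - fks (x i) := by
        have := abs_le.mp ha
        have := abs_le.mp hb'
        have := hmargin
        nlinarith [abs_le.mp ha, abs_le.mp hb']
      nlinarith [hw i, mul_le_mul_of_nonneg_left h2 (hw i)]
    calc Δ - 2 * b = (∑ i, w i * Δ) - 2 * L * ∑ i, w i * ‖x i - q‖ := by
          rw [← Finset.sum_mul, hsum, hb]; ring
      _ = ∑ i, (w i * Δ - 2 * L * (w i * ‖x i - q‖)) := by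
          rw [Finset.sum_sub_distrib, Finset.mul_sum]
      _ ≤ ∑ i, w i * (fk (x i) - fks (x i)) := Finset.sum_le_sum fun i _ => h1 i
  -- event inclusion
  have hsub : {ω | Ek ω ≤ Eks ω} ⊆ {ω | Δ - 2 * b ≤ |S ω - ∫ ω', S ω'|} := by
    intro ω hω
    simp only [Set.mem_setOf_eq] at hω ⊢
    rw [hSmean, sub_zero]
    have h3 := hdet ω
    have h4 : S ω ≤ -(Δ - 2 * b) := by linarith [hgapsum]
    have : Δ - 2 * b ≤ -S ω := by linarith
    calc Δ - 2 * b ≤ -S ω := this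
      _ ≤ |S ω| := neg_le_abs _
  have hc : 0 < Δ - 2 * b := by linarith
  calc ℙ {ω | Ek ω ≤ Eks ω} ≤ ℙ {ω | Δ - 2 * b ≤ |S ω - ∫ ω', S ω'|} :=
        measure_mono hsub
    _ ≤ ENNReal.ofReal (variance S ℙ / (Δ - 2 * b) ^ 2) :=
        meas_ge_le_variance_div_sq hS2 hc
    _ ≤ ENNReal.ofReal (4 * σ ^ 2 / ((Δ - 2 * b) ^ 2 * Neff)) := by
        apply ENNReal.ofReal_le_ofReal
        have hrw : 4 * σ ^ 2 / ((Δ - 2 * b) ^ 2 * Neff)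
            = (4 * σ ^ 2 * ∑ i, (w i) ^ 2) / (Δ - 2 * b) ^ 2 := by
          rw [hNeff]; field_simp
        rw [hrw]
        gcongr
end

section
/- (Selection consistency, bounded-variance version, all competitors.) Let K be a finite set of kernels with |K| ≥ 2 whose latency functions f_k are all L-Lipschitz, and suppose k* ∈ K is the unique best kernel at q with margin Δ > 0, i.e., f_k(q) ≥ f_{k*}(q) + Δ for every k ≠ k*. For each k ≠ k* assume the noise differences δ_{i,k} := ε_{i,k} − ε_{i,k*} are independent across i with E[δ_{i,k}] = 0 and Var(δ_{i,k}) ≤ 4σ². Define Ê_k := Σ_{i=1}^n w̃_i (f_k(x_i) + ε_{i,k}) and b := L · Σ_{i=1}^n w̃_i ‖x_i − q‖, and assume Δ > 2b. Then the probability that k* fails to be the strict minimizer of the estimates, i.e., P(∃ k ≠ k* with Ê_k ≤ Ê_{k*}), is at most 4(|K| − 1)σ² / ((Δ − 2b)² · N_eff). -/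
open MeasureTheory ProbabilityTheory

/-- **Selection consistency, bounded-variance version, all competitors.**
Let `K` be a finite kernel set with `|K| ≥ 2`, all latency functions
`f k` being `L`-Lipschitz, and let `kstar` be the unique best kernel at the
query point `q` with margin `Δ > 0`: `f k q ≥ f kstar q + Δ` for every
`k ≠ kstar`.  For each `k ≠ kstar`, assume the noise differences
`δ_{i,k} := ε_{i,k} − ε_{i,kstar}` are independent across `i`, mean zero, with
variance at most `4σ²`.  With the weighted estimates
`Ê_k := Σ_i w̃_i (f k (x_i) + ε_{i,k})` and bias `b := L·Σ_i w̃_i ‖x_i − q‖`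
satisfying `Δ > 2b`, the probability that `kstar` fails to be the strict
minimizer of the estimates is at most
`4(|K| − 1)σ² / ((Δ − 2b)² · N_eff)`. -/
theorem cake_selection_consistency_all_competitors {Ω : Type*} [MeasureSpace Ω]
    [IsProbabilityMeasure (ℙ : Measure Ω)] {d n : ℕ}
    (q : EuclideanSpace ℝ (Fin d)) (x : Fin n → EuclideanSpace ℝ (Fin d))
    (w : Fin n → ℝ) (hw : ∀ i, 0 ≤ w i) (hsum : ∑ i, w i = 1)
    (Neff : ℝ) (hNeff : Neff = (∑ i, (w i) ^ 2)⁻¹)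
    {K : Type*} [Fintype K] (hcard : 2 ≤ Fintype.card K)
    (f : K → EuclideanSpace ℝ (Fin d) → ℝ) (L : ℝ)
    (hf : ∀ (k : K) (a b : EuclideanSpace ℝ (Fin d)), |f k a - f k b| ≤ L * ‖a - b‖)
    (kstar : K) (Δ : ℝ) (hΔ : 0 < Δ)
    (hmargin : ∀ k, k ≠ kstar → f kstar q + Δ ≤ f k q)
    (ε : Fin n → K → Ω → ℝ)
    (δ : K → Fin n → Ω → ℝ) (hδ : ∀ k i ω, δ k i ω = ε i k ω - ε i kstar ω)
    (hmeas : ∀ k i, Measurable (δ k i)) (hL2 : ∀ k i, MemLp (δ k i) 2)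
    (hindep : ∀ k, k ≠ kstar → iIndepFun (δ k) ℙ)
    (hmean : ∀ k i, k ≠ kstar → ∫ ω, δ k i ω = 0)
    (σ : ℝ) (hvar : ∀ k i, k ≠ kstar → variance (δ k i) ℙ ≤ 4 * σ ^ 2)
    (E : K → Ω → ℝ)
    (hE : ∀ k ω, E k ω = ∑ i, w i * (f k (x i) + ε i k ω))
    (b : ℝ) (hb : b = L * ∑ i, w i * ‖x i - q‖)
    (hgap : 2 * b < Δ) :
    ℙ {ω | ∃ k, k ≠ kstar ∧ E k ω ≤ E kstar ω}
      ≤ ENNReal.ofReal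
          (4 * ((Fintype.card K : ℝ) - 1) * σ ^ 2 / ((Δ - 2 * b) ^ 2 * Neff)) := by
  classical
  set t : ℝ := Δ - 2 * b with ht_def
  have ht : 0 < t := by simp only [ht_def]; linarith
  -- the centered weighted noise sums
  set S : K → Ω → ℝ := fun k ω => ∑ i, w i * δ k i ω with hS_def
  have hS2 : ∀ k, MemLp (S k) 2 := by
    intro k
    have := memLp_finset_sum' (μ := ℙ) Finset.univ (f := fun i ω => w i * δ k i ω)
      (fun i _ => ((hL2 k i).const_mul (w i)))
    convert this using 1
    funext ω; simp [hS_def]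
  have hSint : ∀ k, Integrable (S k) := fun k => (hS2 k).integrable one_le_two
  have hSmean : ∀ k, k ≠ kstar → ∫ ω, S k ω = 0 := by
    intro k hk
    rw [hS_def]
    rw [integral_finset_sum _ fun i _ => ((hL2 k i).integrable one_le_two).const_mul (w i)]
    simp [integral_const_mul, hmean k _ hk]
  have hw2pos : 0 < ∑ i, (w i) ^ 2 := by
    rcases lt_or_eq_of_le (Finset.sum_nonneg fun i _ => sq_nonneg (w i)) with h | h
    · exact h
    · exfalso
      have : ∀ i ∈ Finset.univ, w i = 0 := by
        intro i _
        have := (Finset.sum_eq_zero_iff_of_nonneg (fun i _ => sq_nonneg (w i))).1 h.symm i (Finset.mem_univ i)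
        exact pow_eq_zero_iff (n := 2) (by norm_num) |>.1 this
      rw [Finset.sum_congr rfl this] at hsum
      simp at hsum
  -- variance bound
  have hSvar : ∀ k, k ≠ kstar → variance (S k) ℙ ≤ 4 * σ ^ 2 * ∑ i, (w i) ^ 2 := by
    intro k hk
    have hvs : variance (S k) ℙ = ∑ i, variance (fun ω => w i * δ k i ω) ℙ := by
      have : S k = ∑ i, (fun ω => w i * δ k i ω) := by
        funext ω; simp [hS_def]
      rw [this]
      refine IndepFun.variance_sum (fun i _ => (hL2 k i).const_mul (w i)) ?_
      intro i _ j _ hij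
      have := (hindep k hk).indepFun hij
      exact this.comp (measurable_const_mul (w i)) (measurable_const_mul (w j))
    rw [hvs]
    calc ∑ i, variance (fun ω => w i * δ k i ω) ℙ
        = ∑ i, (w i) ^ 2 * variance (δ k i) ℙ := by
          refine Finset.sum_congr rfl fun i _ => ?_
          exact variance_const_mul (w i) (δ k i) ℙ
      _ ≤ ∑ i, (w i) ^ 2 * (4 * σ ^ 2) := by
          refine Finset.sum_le_sum fun i _ => ?_
          exact mul_le_mul_of_nonneg_left (hvar k i hk) (sq_nonneg _)
      _ = 4 * σ ^ 2 * ∑ i, (w i) ^ 2 := by rw [← Finset.sum_mul]; ring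
  -- pointwise: the bad event for k implies large deviation of S k
  have hincl : ∀ k, k ≠ kstar → ∀ ω, E k ω ≤ E kstar ω → t ≤ |S k ω - ∫ ω', S k ω'| := by
    intro k hk ω hω
    rw [hSmean k hk, sub_zero]
    have hdiff : E k ω - E kstar ω = (∑ i, w i * (f k (x i) - f kstar (x i))) + S k ω := by
      rw [hE, hE, hS_def, ← Finset.sum_add_distrib, ← Finset.sum_sub_distrib]
      refine Finset.sum_congr rfl fun i _ => ?_
      rw [hδ]; ring
    have hlow : t ≤ ∑ i, w i * (f k (x i) - f kstar (x i)) := by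
      have hterm : ∀ i, w i * (Δ - 2 * (L * ‖x i - q‖)) ≤ w i * (f k (x i) - f kstar (x i)) := by
        intro i
        refine mul_le_mul_of_nonneg_left ?_ (hw i)
        have h1 := abs_le.1 (hf k (x i) q)
        have h2 := abs_le.1 (hf kstar (x i) q)
        have h3 := hmargin k hk
        simp only [sub_le_iff_le_add, neg_le_sub_iff_le_add] at h1 h2
        linarith [h1.1, h1.2, h2.1, h2.2]
      calc t = ∑ i, w i * (Δ - 2 * (L * ‖x i - q‖)) := by
              simp only [ht_def, hb]
              rw [Finset.sum_congr rfl (fun i (_ : i ∈ Finset.univ) =>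
                (by ring : w i * (Δ - 2 * (L * ‖x i - q‖)) = Δ * w i - 2 * L * (w i * ‖x i - q‖)))]
              rw [Finset.sum_sub_distrib, ← Finset.mul_sum, ← Finset.mul_sum, hsum]
              ring
        _ ≤ _ := Finset.sum_le_sum fun i _ => hterm i
    have : S k ω ≤ -t := by linarith
    calc t ≤ -(S k ω) := by linarith
      _ ≤ |S k ω| := neg_le_abs _
  -- union bound
  have hsubset : {ω | ∃ k, k ≠ kstar ∧ E k ω ≤ E kstar ω} ⊆
      ⋃ k ∈ Finset.univ.erase kstar, {ω | t ≤ |S k ω - ∫ ω', S k ω'|} := by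
    intro ω hω
    obtain ⟨k, hk, hle⟩ := hω
    exact Set.mem_biUnion (Finset.mem_erase.2 ⟨hk, Finset.mem_univ k⟩) (hincl k hk ω hle)
  have hcheb : ∀ k, k ≠ kstar →
      ℙ {ω | t ≤ |S k ω - ∫ ω', S k ω'|} ≤
        ENNReal.ofReal (4 * σ ^ 2 * (∑ i, (w i) ^ 2) / t ^ 2) := by
    intro k hk
    refine (meas_ge_le_variance_div_sq (hS2 k) ht).trans ?_
    exact ENNReal.ofReal_le_ofReal (by
      apply div_le_div_of_nonneg_right (hSvar k hk) (by positivity) |>.trans_eq rfl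
      )
  calc ℙ {ω | ∃ k, k ≠ kstar ∧ E k ω ≤ E kstar ω}
      ≤ ℙ (⋃ k ∈ Finset.univ.erase kstar, {ω | t ≤ |S k ω - ∫ ω', S k ω'|}) :=
        measure_mono hsubset
    _ ≤ ∑ k ∈ Finset.univ.erase kstar, ℙ {ω | t ≤ |S k ω - ∫ ω', S k ω'|} :=
        measure_biUnion_finset_le _ _
    _ ≤ ∑ k ∈ Finset.univ.erase kstar, ENNReal.ofReal (4 * σ ^ 2 * (∑ i, (w i) ^ 2) / t ^ 2) :=
        Finset.sum_le_sum fun k hk => hcheb k (Finset.mem_erase.1 hk).1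
    _ = (Fintype.card K - 1 : ℕ) • ENNReal.ofReal (4 * σ ^ 2 * (∑ i, (w i) ^ 2) / t ^ 2) := by
        rw [Finset.sum_const, Finset.card_erase_of_mem (Finset.mem_univ kstar),
          Finset.card_univ]
    _ = ENNReal.ofReal (((Fintype.card K : ℝ) - 1) * (4 * σ ^ 2 * (∑ i, (w i) ^ 2) / t ^ 2)) := by
        rw [nsmul_eq_mul, ← ENNReal.ofReal_natCast, ← ENNReal.ofReal_mul (by positivity)]
        congr 2
        rw [Nat.cast_sub (by omega)]
        push_cast
        ring
    _ = ENNReal.ofReal (4 * ((Fintype.card K : ℝ) - 1) * σ ^ 2 / ((Δ - 2 * b) ^ 2 * Neff)) := by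
        congr 1
        rw [hNeff, ← ht_def]
        field_simp
end

section
/- (Linear-rate convergence corollary.) Under the hypotheses of the bounded-variance selection consistency statement (L-Lipschitz f_k and f_{k*}, margin f_k(q) − f_{k*}(q) ≥ Δ, independent mean-zero noise differences with variance at most 4σ², bias b := L · Σ_i w̃_i ‖x_i − q‖ with Δ > 2b), if additionally the unnormalized weights satisfy 0 < c ≤ w_i ≤ 1 for every i, then P(Ê_k ≤ Ê_{k*}) ≤ 4σ² / ((Δ − 2b)² · c² · n), which tends to 0 as the history size n → ∞ at rate at least 1/n. -/
open MeasureTheory ProbabilityTheory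

/-- **Linear-rate convergence corollary.**
Under the hypotheses of the bounded-variance selection-consistency statement
(`L`-Lipschitz `f_k`, `f_{k*}`; margin `f_k(q) − f_{k*}(q) ≥ Δ`; independent
mean-zero noise differences with variance at most `4σ²`; bias
`b := L·Σ_i w̃_i ‖x_i − q‖` with `Δ > 2b`), if additionally the unnormalized
weights satisfy `0 < c ≤ w_i ≤ 1` for every `i` (with
`w̃_i := w_i / Σ_j w_j`), then
`P(Ê_k ≤ Ê_{k*}) ≤ 4σ² / ((Δ − 2b)² · c² · n)`, which tends to `0` as
`n → ∞` at rate at least `1/n`. -/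
theorem cake_linear_rate_convergence {Ω : Type*} [MeasureSpace Ω]
    [IsProbabilityMeasure (ℙ : Measure Ω)] {d n : ℕ} (hn : 0 < n)
    (q : EuclideanSpace ℝ (Fin d)) (x : Fin n → EuclideanSpace ℝ (Fin d))
    (w : Fin n → ℝ) (c : ℝ) (hc : 0 < c)
    (hlb : ∀ i, c ≤ w i) (hub : ∀ i, w i ≤ 1)
    (wt : Fin n → ℝ) (hwt : ∀ i, wt i = w i / ∑ j, w j)
    (fk fks : EuclideanSpace ℝ (Fin d) → ℝ) (L : ℝ)
    (hfk : ∀ a b : EuclideanSpace ℝ (Fin d), |fk a - fk b| ≤ L * ‖a - b‖)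
    (hfks : ∀ a b : EuclideanSpace ℝ (Fin d), |fks a - fks b| ≤ L * ‖a - b‖)
    (Δ : ℝ) (hΔ : 0 < Δ) (hmargin : Δ ≤ fk q - fks q)
    (εk εks : Fin n → Ω → ℝ)
    (δ : Fin n → Ω → ℝ) (hδ : ∀ i ω, δ i ω = εk i ω - εks i ω)
    (hmeas : ∀ i, Measurable (δ i)) (hL2 : ∀ i, MemLp (δ i) 2)
    (hindep : iIndepFun δ ℙ)
    (hmean : ∀ i, ∫ ω, δ i ω = 0)
    (σ : ℝ) (hvar : ∀ i, variance (δ i) ℙ ≤ 4 * σ ^ 2)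
    (Ek Eks : Ω → ℝ)
    (hEk : ∀ ω, Ek ω = ∑ i, wt i * (fk (x i) + εk i ω))
    (hEks : ∀ ω, Eks ω = ∑ i, wt i * (fks (x i) + εks i ω))
    (b : ℝ) (hb : b = L * ∑ i, wt i * ‖x i - q‖)
    (hgap : 2 * b < Δ) :
    ℙ {ω | Ek ω ≤ Eks ω}
      ≤ ENNReal.ofReal (4 * σ ^ 2 / ((Δ - 2 * b) ^ 2 * c ^ 2 * (n : ℝ))) := by
  have hn' : (0 : ℝ) < n := by exact_mod_cast hn
  have hsum_ge : c * n ≤ ∑ j, w j := by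
    calc c * n = ∑ _j : Fin n, c := by simp [mul_comm]
    _ ≤ ∑ j, w j := Finset.sum_le_sum fun i _ => hlb i
  have hsum_pos : (0 : ℝ) < ∑ j, w j := lt_of_lt_of_le (by positivity) hsum_ge
  have hwt_nonneg : ∀ i, 0 ≤ wt i := fun i => by
    rw [hwt i]; exact div_nonneg (le_of_lt (lt_of_lt_of_le hc (hlb i))) hsum_pos.le
  have hwt_le : ∀ i, wt i ≤ 1 / (c * n) := fun i => by
    rw [hwt i]
    exact div_le_div₀ (by norm_num) (hub i) (by positivity) hsum_ge
  have hwt_sum : ∑ i, wt i = 1 := by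
    simp only [hwt]
    rw [← Finset.sum_div, div_self hsum_pos.ne']
  -- the weighted noise sum
  set Y : Fin n → Ω → ℝ := fun i => wt i • δ i with hY
  set S : Ω → ℝ := ∑ i, Y i with hS
  have hSω : ∀ ω, S ω = ∑ i, wt i * δ i ω := fun ω => by
    simp [hS, hY, Finset.sum_apply]
  have hYL2 : ∀ i, MemLp (Y i) 2 := fun i => (hL2 i).const_smul (wt i)
  have hYint : ∀ i, Integrable (Y i) := fun i => (hYL2 i).integrable one_le_two
  have hSL2 : MemLp S 2 := memLp_finset_sum' _ (fun i _ => hYL2 i)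
  have hSmean : ∫ ω, S ω = 0 := by
    rw [hS]
    simp only [Finset.sum_apply]
    rw [integral_finset_sum _ (fun i _ => hYint i)]
    refine Finset.sum_eq_zero fun i _ => ?_
    have : ∫ ω, Y i ω = wt i * ∫ ω, δ i ω := by
      simp only [hY, Pi.smul_apply, smul_eq_mul]
      exact integral_const_mul _ _
    rw [this, hmean i, mul_zero]
  -- variance bound
  have hvarS : variance S ℙ ≤ 4 * σ ^ 2 / (c ^ 2 * n) := by
    have h1 : variance S ℙ = ∑ i, variance (Y i) ℙ := by
      refine IndepFun.variance_sum (fun i _ => hYL2 i) ?_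
      intro i _ j _ hij
      exact ((hindep.indepFun hij).comp (measurable_const_mul (wt i))
        (measurable_const_mul (wt j)))
    have h2 : ∀ i, variance (Y i) ℙ ≤ (1 / (c * n)) ^ 2 * (4 * σ ^ 2) := by
      intro i
      rw [hY]
      simp only []
      rw [variance_smul]
      have := mul_le_mul (pow_le_pow_left₀ (hwt_nonneg i) (hwt_le i) 2) (hvar i)
        (variance_nonneg _ _) (by positivity)
      exact this
    calc variance S ℙ = ∑ i, variance (Y i) ℙ := h1
      _ ≤ ∑ _i : Fin n, (1 / (c * n)) ^ 2 * (4 * σ ^ 2) :=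
          Finset.sum_le_sum fun i _ => h2 i
      _ = n * ((1 / (c * n)) ^ 2 * (4 * σ ^ 2)) := by simp [mul_comm]
      _ = 4 * σ ^ 2 / (c ^ 2 * n) := by field_simp
  -- event inclusion
  have hgap' : 0 < Δ - 2 * b := by linarith
  have hsubset : {ω | Ek ω ≤ Eks ω} ⊆ {ω | Δ - 2 * b ≤ |S ω - ∫ ω, S ω|} := by
    intro ω (hω : Ek ω ≤ Eks ω)
    have hdiff : Ek ω - Eks ω = (∑ i, wt i * (fk (x i) - fks (x i))) + S ω := by
      rw [hEk, hEks, hSω, ← Finset.sum_add_distrib, ← Finset.sum_sub_distrib]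
      refine Finset.sum_congr rfl fun i _ => ?_
      rw [hδ]; ring
    have hterm : ∀ i, Δ - 2 * L * ‖x i - q‖ ≤ fk (x i) - fks (x i) := by
      intro i
      have h1 := abs_le.1 (hfk (x i) q)
      have h2 := abs_le.1 (hfks (x i) q)
      have := hmargin
      -- fk(x i) ≥ fk q - L‖x i - q‖, fks(x i) ≤ fks q + L‖x i - q‖
      nlinarith [h1.1, h1.2, h2.1, h2.2]
    have hmean_sum : Δ - 2 * b ≤ ∑ i, wt i * (fk (x i) - fks (x i)) := by
      have : ∑ i, wt i * (Δ - 2 * L * ‖x i - q‖)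
          ≤ ∑ i, wt i * (fk (x i) - fks (x i)) :=
        Finset.sum_le_sum fun i _ =>
          mul_le_mul_of_nonneg_left (hterm i) (hwt_nonneg i)
      calc Δ - 2 * b = ∑ i, wt i * (Δ - 2 * L * ‖x i - q‖) := by
            simp only [mul_sub, Finset.sum_sub_distrib, ← Finset.mul_sum, hb]
            rw [← Finset.sum_mul, hwt_sum]
            rw [Finset.mul_sum]
            congr 1
            · ring
            · rw [Finset.mul_sum]
              congr 1; funext i; ring
        _ ≤ _ := this
    have : S ω ≤ -(Δ - 2 * b) := by linarith [hdiff, hω, hmean_sum]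
    rw [Set.mem_setOf_eq, hSmean, sub_zero]
    calc Δ - 2 * b ≤ -S ω := by linarith
      _ ≤ |S ω| := neg_le_abs _
  calc ℙ {ω | Ek ω ≤ Eks ω} ≤ ℙ {ω | Δ - 2 * b ≤ |S ω - ∫ ω, S ω|} :=
        measure_mono hsubset
    _ ≤ ENNReal.ofReal (variance S ℙ / (Δ - 2 * b) ^ 2) :=
        meas_ge_le_variance_div_sq hSL2 hgap'
    _ ≤ ENNReal.ofReal (4 * σ ^ 2 / ((Δ - 2 * b) ^ 2 * c ^ 2 * n)) := by
        apply ENNReal.ofReal_le_ofReal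
        rw [div_le_div_iff₀ (by positivity) (by positivity)]
        calc variance S ℙ * ((Δ - 2 * b) ^ 2 * c ^ 2 * ↑n)
            ≤ (4 * σ ^ 2 / (c ^ 2 * n)) * ((Δ - 2 * b) ^ 2 * c ^ 2 * ↑n) := by
              apply mul_le_mul_of_nonneg_right hvarS (by positivity)
          _ = 4 * σ ^ 2 * (Δ - 2 * b) ^ 2 := by field_simp
end

section
/- (Weighted distance is O(h).) Suppose there exists an index j with ‖x_j − q‖ ≤ h, and let D := max_{1 ≤ i ≤ n} ‖x_i − q‖. Then for every R > 0, the locality-weighted mean distance satisfies Σ_{i=1}^n w̃_i ‖x_i − q‖ ≤ R·h + D · n · exp(1 − R²). -/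
/-- **The locality-weighted mean distance is `O(h)`.**
With RBF weights `w_i = exp(−‖x_i − q‖²/h²)` and normalized weights
`w̃_i = w_i / Σ_j w_j`, suppose some data point satisfies `‖x_j − q‖ ≤ h`, and
let `D := max_i ‖x_i − q‖`.  Then for every `R > 0`,
`Σ_i w̃_i ‖x_i − q‖ ≤ R·h + D · n · exp(1 − R²)`. -/
theorem cake_weighted_distance_O_h {d n : ℕ} [NeZero n]
    (q : EuclideanSpace ℝ (Fin d)) (x : Fin n → EuclideanSpace ℝ (Fin d))
    (h : ℝ) (hh : 0 < h)
    (w : Fin n → ℝ) (hw : ∀ i, w i = Real.exp (-‖x i - q‖ ^ 2 / h ^ 2))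
    (wt : Fin n → ℝ) (hwt : ∀ i, wt i = w i / ∑ j, w j)
    (hnear : ∃ j, ‖x j - q‖ ≤ h)
    (D : ℝ) (hD : D = Finset.univ.sup' Finset.univ_nonempty (fun i => ‖x i - q‖))
    (R : ℝ) (hR : 0 < R) :
    ∑ i, wt i * ‖x i - q‖ ≤ R * h + D * (n : ℝ) * Real.exp (1 - R ^ 2) := by
  classical
  obtain ⟨j, hj⟩ := hnear
  set S := ∑ j, w j with hS
  have hwpos : ∀ i, 0 < w i := fun i => by rw [hw]; exact Real.exp_pos _
  have hSpos : 0 < S := Finset.sum_pos (fun i _ => hwpos i) Finset.univ_nonempty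
  have hSge : Real.exp (-1) ≤ S := by
    have h1 : Real.exp (-1) ≤ w j := by
      rw [hw]
      apply Real.exp_le_exp.2
      rw [neg_div, neg_le_neg_iff, div_le_one (by positivity)]
      exact pow_le_pow_left₀ (norm_nonneg _) hj 2
    exact h1.trans (Finset.single_le_sum (fun i _ => (hwpos i).le) (Finset.mem_univ j))
  have hwtnn : ∀ i, 0 ≤ wt i := fun i => by
    rw [hwt]; exact div_nonneg (hwpos i).le hSpos.le
  have hwtsum : ∑ i, wt i = 1 := by
    simp only [hwt]
    rw [← Finset.sum_div, div_self hSpos.ne']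
  have hDi : ∀ i, ‖x i - q‖ ≤ D := fun i => hD ▸ Finset.le_sup' (fun i => ‖x i - q‖) (Finset.mem_univ i)
  have hD0 : 0 ≤ D := le_trans (norm_nonneg _) (hDi j)
  rw [← Finset.sum_filter_add_sum_filter_not Finset.univ (fun i => ‖x i - q‖ ≤ R * h)]
  have part1 : ∑ i ∈ Finset.univ.filter (fun i => ‖x i - q‖ ≤ R * h),
      wt i * ‖x i - q‖ ≤ R * h := by
    calc ∑ i ∈ Finset.univ.filter (fun i => ‖x i - q‖ ≤ R * h), wt i * ‖x i - q‖
        ≤ ∑ i ∈ Finset.univ.filter (fun i => ‖x i - q‖ ≤ R * h), wt i * (R * h) := by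
          apply Finset.sum_le_sum
          intro i hi
          exact mul_le_mul_of_nonneg_left (Finset.mem_filter.1 hi).2 (hwtnn i)
      _ = (∑ i ∈ Finset.univ.filter (fun i => ‖x i - q‖ ≤ R * h), wt i) * (R * h) := by
          rw [Finset.sum_mul]
      _ ≤ 1 * (R * h) := by
          apply mul_le_mul_of_nonneg_right _ (by positivity)
          rw [← hwtsum]
          exact Finset.sum_le_sum_of_subset_of_nonneg (Finset.subset_univ _)
            (fun i _ _ => hwtnn i)
      _ = R * h := one_mul _
  have part2 : ∑ i ∈ Finset.univ.filter (fun i => ¬ ‖x i - q‖ ≤ R * h),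
      wt i * ‖x i - q‖ ≤ D * (n : ℝ) * Real.exp (1 - R ^ 2) := by
    have hterm : ∀ i ∈ Finset.univ.filter (fun i => ¬ ‖x i - q‖ ≤ R * h),
        wt i * ‖x i - q‖ ≤ Real.exp (1 - R ^ 2) * D := by
      intro i hi
      have hfar : R * h < ‖x i - q‖ := lt_of_not_ge (Finset.mem_filter.1 hi).2
      have hwle : w i ≤ Real.exp (-R ^ 2) := by
        rw [hw]
        apply Real.exp_le_exp.2
        rw [neg_div, neg_le_neg_iff, le_div_iff₀ (by positivity)]
        calc R ^ 2 * h ^ 2 = (R * h) ^ 2 := by ring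
          _ ≤ ‖x i - q‖ ^ 2 := pow_le_pow_left₀ (by positivity) hfar.le 2
      have hwtle : wt i ≤ Real.exp (1 - R ^ 2) := by
        rw [hwt, div_le_iff₀ hSpos]
        calc w i ≤ Real.exp (-R ^ 2) := hwle
          _ = Real.exp (1 - R ^ 2) * Real.exp (-1) := by
              rw [← Real.exp_add]; ring_nf
          _ ≤ Real.exp (1 - R ^ 2) * S :=
              mul_le_mul_of_nonneg_left hSge (Real.exp_pos _).le
      exact mul_le_mul hwtle (hDi i) (norm_nonneg _) (Real.exp_pos _).le
    calc ∑ i ∈ Finset.univ.filter (fun i => ¬ ‖x i - q‖ ≤ R * h), wt i * ‖x i - q‖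
        ≤ (Finset.univ.filter (fun i => ¬ ‖x i - q‖ ≤ R * h)).card •
            (Real.exp (1 - R ^ 2) * D) := Finset.sum_le_card_nsmul _ _ _ hterm
      _ = ((Finset.univ.filter (fun i => ¬ ‖x i - q‖ ≤ R * h)).card : ℝ) *
            (Real.exp (1 - R ^ 2) * D) := by rw [nsmul_eq_mul]
      _ ≤ (n : ℝ) * (Real.exp (1 - R ^ 2) * D) := by
          apply mul_le_mul_of_nonneg_right _ (by positivity)
          exact_mod_cast (Finset.card_filter_le _ _).trans_eq (Finset.card_univ.trans (Fintype.card_fin n))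
      _ = D * (n : ℝ) * Real.exp (1 - R ^ 2) := by ring
  linarith
end
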